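/- Let Φ : ℝ^d → ℝ^m be a feature map, ψ a probability distribution on ℝ^d, and f : ℝ^d → ℝ a target function, with f and each component of Φ square-integrable under ψ. Let X_1, …, X_n be i.i.d. samples from ψ and let ξ be a random vector in ℝ^m, independent of (X_1,…,X_n), whose components are i.i.d. with mean zero and variance σ_ξ². Define the noisy sketch s = (1/n)(∑_{i=1}^n Φ(X_i) + ξ) and the regularized loss J(a) = E_{X∼ψ}[(f(X) − ⟨a, Φ(X)⟩)²] + λ‖a‖₂² with λ = σ_ξ²/n². Then for every a ∈ ℝ^m, J(a) ≥ E_{X_1,…,X_n,ξ}[ ( (1/n)∑_{i=1}^n f(X_i) − ⟨a, s⟩ )² ]. -/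

import Mathlib

/-!
Write `g = f - ⟨a, Φ⟩`. The estimation error is `(1/n) (∑ᵢ g(Xᵢ) - ⟨a, ξ⟩)`, and the two terms
are independent with the noise term centred, so its mean square splits into
`E (∑ᵢ g(Xᵢ))² + σξ² ‖a‖²`, up to the factor `1/n²`. For i.i.d. samples
`E (∑ᵢ g(Xᵢ))² = n Var g + n² (E g)² ≤ n² E g²`, and `E g²` is the first term of `J(a)`.
-/

open MeasureTheory ProbabilityTheory

section SecondMoments

variable {Ω : Type*} [MeasurableSpace Ω] {μ : Measure Ω}

lemma integral_sq_eq_variance_add_sq [IsProbabilityMeasure μ] {Y : Ω → ℝ} (hY : MemLp Y 2 μ) :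
    ∫ ω, Y ω ^ 2 ∂μ = Var[Y; μ] + (∫ ω, Y ω ∂μ) ^ 2 := by
  simp only [variance_eq_sub hY, Pi.pow_apply]
  ring

lemma ProbabilityTheory.IndepFun.integral_sub_sq_of_integral_eq_zero [IsProbabilityMeasure μ]
    {S Z : Ω → ℝ} (hSZ : IndepFun S Z μ) (hS : MemLp S 2 μ) (hZ : MemLp Z 2 μ)
    (hZ0 : ∫ ω, Z ω ∂μ = 0) :
    ∫ ω, (S ω - Z ω) ^ 2 ∂μ = ∫ ω, S ω ^ 2 ∂μ + ∫ ω, Z ω ^ 2 ∂μ := by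
  rw [integral_sq_eq_variance_add_sq (Y := fun ω => S ω - Z ω) (hS.sub hZ),
    integral_sq_eq_variance_add_sq hS, integral_sq_eq_variance_add_sq hZ, variance_fun_sub hS hZ,
    hSZ.covariance_eq_zero hS hZ, integral_sub (hS.integrable one_le_two)
      (hZ.integrable one_le_two), hZ0]
  ring

lemma integral_sum_mul_eq_zero {ι : Type*} [Fintype ι] {ξ : ι → Ω → ℝ}
    (hξ : ∀ j, Integrable (ξ j) μ) (hmean : ∀ j, ∫ ω, ξ j ω ∂μ = 0) (a : ι → ℝ) :
    ∫ ω, ∑ j, a j * ξ j ω ∂μ = 0 := by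
  simp [integral_finsetSum _ fun j _ => (hξ j).const_mul (a j), integral_const_mul, hmean]

lemma integral_sum_mul_sq [IsProbabilityMeasure μ] {ι : Type*} [Fintype ι] {ξ : ι → Ω → ℝ}
    {σ : ℝ} (hindep : Pairwise fun i j => IndepFun (ξ i) (ξ j) μ) (hξ : ∀ j, MemLp (ξ j) 2 μ)
    (hmean : ∀ j, ∫ ω, ξ j ω ∂μ = 0) (hvar : ∀ j, ∫ ω, ξ j ω ^ 2 ∂μ = σ ^ 2) (a : ι → ℝ) :
    ∫ ω, (∑ j, a j * ξ j ω) ^ 2 ∂μ = σ ^ 2 * ∑ j, a j ^ 2 := by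
  have hξa : ∀ j, MemLp (fun ω => a j * ξ j ω) 2 μ := fun j => (hξ j).const_mul (a j)
  have hindep_a : Set.Pairwise (Finset.univ : Finset ι)
      fun i j => IndepFun (fun ω => a i * ξ i ω) (fun ω => a j * ξ j ω) μ :=
    fun i _ j _ hij => (hindep hij).comp (measurable_const_mul (a i)) (measurable_const_mul (a j))
  rw [← variance_of_integral_eq_zero (memLp_finsetSum _ fun j _ => hξa j).aemeasurable
      (integral_sum_mul_eq_zero (fun j => (hξ j).integrable one_le_two) hmean a)]
  have hsum := IndepFun.variance_sum (fun j _ => hξa j) hindep_a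
  simp only [Finset.sum_fn] at hsum
  simp only [hsum, variance_const_mul,
    fun j => variance_of_integral_eq_zero (hξ j).aemeasurable (hmean j), hvar, Finset.mul_sum]
  exact Finset.sum_congr rfl fun j _ => mul_comm _ _

end SecondMoments

section Sampling

variable {Ω α ι : Type*} [MeasurableSpace Ω] [MeasurableSpace α] [Fintype ι] {μ : Measure Ω}
  {ψ : Measure α} {X : ι → Ω → α} {g : α → ℝ}

lemma integral_sum_comp_sq_le [IsProbabilityMeasure μ] [IsProbabilityMeasure ψ]
    (hX : ∀ i, AEMeasurable (X i) μ) (hindep : Pairwise fun i j => IndepFun (X i) (X j) μ)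
    (hdist : ∀ i, μ.map (X i) = ψ) (hg : MemLp g 2 ψ) :
    ∫ ω, (∑ i, g (X i ω)) ^ 2 ∂μ ≤ (Fintype.card ι : ℝ) ^ 2 * ∫ x, g x ^ 2 ∂ψ := by
  have hg_map : ∀ i, MemLp g 2 (μ.map (X i)) := fun i => (hdist i).symm ▸ hg
  have hgX : ∀ i, MemLp (fun ω => g (X i ω)) 2 μ := fun i => (hg_map i).comp_of_map (hX i)
  have hvar : ∀ i, Var[fun ω => g (X i ω); μ] = Var[g; ψ] := fun i => by
    rw [← hdist i, variance_map (hg_map i).aemeasurable (hX i)]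
    rfl
  have hmean : ∀ i, ∫ ω, g (X i ω) ∂μ = ∫ x, g x ∂ψ := fun i => by
    rw [← hdist i, integral_map (hX i) (hg_map i).aestronglyMeasurable]
  have hindep_g : Set.Pairwise (Finset.univ : Finset ι)
      fun i j => IndepFun (fun ω => g (X i ω)) (fun ω => g (X j ω)) μ :=
    fun i _ j _ hij => (hindep hij).comp₀ (hX i) (hX j) (hg_map i).aemeasurable
      (hg_map j).aemeasurable
  have hsum := IndepFun.variance_sum (fun i _ => hgX i) hindep_g
  simp only [Finset.sum_fn] at hsum
  have hcard : (Fintype.card ι : ℝ) ≤ (Fintype.card ι : ℝ) ^ 2 := by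
    exact_mod_cast Nat.le_self_pow two_ne_zero _
  rw [integral_sq_eq_variance_add_sq (memLp_finsetSum _ fun i _ => hgX i), hsum,
    integral_finsetSum _ fun i _ => (hgX i).integrable one_le_two,
    integral_sq_eq_variance_add_sq hg]
  simp only [hvar, hmean, Finset.sum_const, Finset.card_univ, nsmul_eq_mul]
  nlinarith [variance_nonneg g ψ]

lemma aemeasurable_sum_comp_eval (hX : ∀ i, Measurable (X i)) (hdist : ∀ i, μ.map (X i) = ψ)
    (hg : AEMeasurable g ψ) :
    AEMeasurable (fun v : ι → α => ∑ i, g (v i)) (μ.map fun ω i => X i ω) :=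
  Finset.aemeasurable_fun_sum _ fun i _ => AEMeasurable.comp_aemeasurable (g := g)
    (by rwa [Measure.map_map (measurable_pi_apply i) (measurable_pi_lambda _ hX), Function.comp_def,
      hdist i]) (measurable_pi_apply i).aemeasurable

end Sampling

lemma sketch_error_eq {ι κ : Type*} [Fintype ι] [Fintype κ] (c : ℝ) (u : ι → ℝ)
    (v : ι → κ → ℝ) (w a : κ → ℝ) :
    c * ∑ i, u i - ∑ j, a j * (c * (∑ i, v i j + w j))
      = c * (∑ i, (u i - ∑ j, a j * v i j) - ∑ j, a j * w j) := by
  simp only [Finset.sum_sub_distrib, Finset.mul_sum, mul_add, Finset.sum_add_distrib, mul_sub]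
  rw [Finset.sum_comm]
  ring_nf

/-- **M2M loss upper bound.** Given a feature map `Φ : ℝ^d → ℝ^m`, a training
distribution `ψ`, a square-integrable target `f`, i.i.d. samples `X_1, …, X_n ∼ ψ`,
and noise `ξ` independent of the samples with i.i.d. centered components of
variance `σξ²`, the regularized loss
`J(a) = E_ψ[(f(X) - ⟨a, Φ(X)⟩)²] + (σξ²/n²)‖a‖₂²`
upper-bounds the mean squared error of the sketch-based estimate
`⟨a, (1/n)(∑ᵢ Φ(Xᵢ) + ξ)⟩` of the empirical mean `(1/n)∑ᵢ f(Xᵢ)`. -/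
theorem m2m_loss_upper_bound
    {Ω : Type*} [MeasurableSpace Ω] (μ : Measure Ω) [IsProbabilityMeasure μ]
    (d m n : ℕ) (hn : 0 < n)
    (ψ : Measure (Fin d → ℝ)) [IsProbabilityMeasure ψ]
    (Φ : (Fin d → ℝ) → Fin m → ℝ) (f : (Fin d → ℝ) → ℝ)
    (hf : MemLp f 2 ψ) (hΦ : ∀ j, MemLp (fun x => Φ x j) 2 ψ)
    (X : Fin n → Ω → Fin d → ℝ)
    (hXmeas : ∀ i, Measurable (X i))
    (hXindep : iIndepFun X μ)
    (hXdist : ∀ i, Measure.map (X i) μ = ψ)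
    (ξ : Ω → Fin m → ℝ) (hξmeas : Measurable ξ)
    (σξ : ℝ)
    (hXξindep : IndepFun (fun ω i => X i ω) ξ μ)
    (hξindep : iIndepFun (fun j ω => ξ ω j) μ)
    (hξL2 : ∀ j, MemLp (fun ω => ξ ω j) 2 μ)
    (hξmean : ∀ j, ∫ ω, ξ ω j ∂μ = 0)
    (hξvar : ∀ j, ∫ ω, (ξ ω j) ^ 2 ∂μ = σξ ^ 2)
    (a : Fin m → ℝ) :
    (∫ x, (f x - ∑ j, a j * Φ x j) ^ 2 ∂ψ)
        + (σξ ^ 2 / (n : ℝ) ^ 2) * ∑ j, (a j) ^ 2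
      ≥ ∫ ω, ((1 / (n : ℝ)) * ∑ i, f (X i ω)
          - ∑ j, a j * ((1 / (n : ℝ)) * (∑ i, Φ (X i ω) j + ξ ω j))) ^ 2 ∂μ := by
  set g : (Fin d → ℝ) → ℝ := fun x => f x - ∑ j, a j * Φ x j
  have hg : MemLp g 2 ψ := hf.sub (memLp_finsetSum _ fun j _ => (hΦ j).const_mul (a j))
  have hS : MemLp (fun ω => ∑ i, g (X i ω)) 2 μ :=
    memLp_finsetSum _ fun i _ => ((hXdist i).symm ▸ hg).comp_of_map (hXmeas i).aemeasurable
  have hZ : MemLp (fun ω => ∑ j, a j * ξ ω j) 2 μ :=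
    memLp_finsetSum _ fun j _ => (hξL2 j).const_mul (a j)
  have hSZ : IndepFun (fun ω => ∑ i, g (X i ω)) (fun ω => ∑ j, a j * ξ ω j) μ :=
    hXξindep.comp₀ (measurable_pi_lambda _ hXmeas).aemeasurable hξmeas.aemeasurable
      (aemeasurable_sum_comp_eval hXmeas hXdist hg.aemeasurable)
      (by fun_prop : Measurable fun w : Fin m → ℝ => ∑ j, a j * w j).aemeasurable
  have hZ0 := integral_sum_mul_eq_zero (fun j => (hξL2 j).integrable one_le_two) hξmean a
  have hS2 := integral_sum_comp_sq_le (fun i => (hXmeas i).aemeasurable)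
    (fun i j hij => hXindep.indepFun hij) hXdist hg
  have hZ2 := integral_sum_mul_sq (fun i j hij => hξindep.indepFun hij) hξL2 hξmean hξvar a
  rw [Fintype.card_fin] at hS2
  have hn' : (n : ℝ) ≠ 0 := Nat.cast_ne_zero.mpr hn.ne'
  simp_rw [sketch_error_eq, mul_pow]
  rw [ge_iff_le, integral_const_mul, hSZ.integral_sub_sq_of_integral_eq_zero hS hZ hZ0, hZ2]
  calc (1 / (n : ℝ)) ^ 2 * (∫ ω, (∑ i, g (X i ω)) ^ 2 ∂μ + σξ ^ 2 * ∑ j, a j ^ 2)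
      ≤ (1 / (n : ℝ)) ^ 2 * ((n : ℝ) ^ 2 * ∫ x, g x ^ 2 ∂ψ + σξ ^ 2 * ∑ j, a j ^ 2) := by
        gcongr
    _ = ∫ x, g x ^ 2 ∂ψ + σξ ^ 2 / (n : ℝ) ^ 2 * ∑ j, a j ^ 2 := by
        field_simp
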